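/- arXiv:1503.05085 — 7 statements merged into one kernel-verified Lean document; each statement's English description precedes it below -/
import Mathlib

section
/- For self-adjoint operators A, B on a complex inner product space, a unit vector ψ, and any unit vector ψ⊥ orthogonal to ψ: ΔA² + ΔB² ≥ ±i⟨ψ, [A,B]ψ⟩ + |⟨ψ, (A ± iB)ψ⊥⟩|², where the sign is chosen so that ±i⟨ψ,[A,B]ψ⟩ ≥ 0. -/
/-!
Put `φ = (A - ⟨A⟩)ψ - s i (B - ⟨B⟩)ψ`. Expanding, `‖φ‖² = ΔA² + ΔB² - s Re(i⟨ψ, [A,B]ψ⟩)`, because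
`Im⟨Aψ, Bψ⟩` is the only cross term that survives and `⟨ψ, [A,B]ψ⟩ = 2i Im⟨Aψ, Bψ⟩`. As `ψ⊥ ⟂ ψ`,
`⟨ψ, (A + s i B)ψ⊥⟩ = ⟨φ, ψ⊥⟩`, and Cauchy–Schwarz against the unit vector `ψ⊥` bounds its
square by `‖φ‖²`.
-/

open Complex ComplexConjugate
open LinearMap (IsSymmetric)

local notation "⟪" x ", " y "⟫" => @inner ℂ _ _ x y

section

variable {E : Type*} [NormedAddCommGroup E] [InnerProductSpace ℂ E]

noncomputable def deviation (A : E →ₗ[ℂ] E) (ψ : E) : E := A ψ - ⟪ψ, A ψ⟫ • ψ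

theorem inner_deviation_left_of_inner_eq_zero (A : E →ₗ[ℂ] E) {ψ φ : E} (h : ⟪ψ, φ⟫ = 0) :
    ⟪deviation A ψ, φ⟫ = ⟪A ψ, φ⟫ := by
  simp [deviation, h]

theorem inner_deviation_deviation (A B : E →ₗ[ℂ] E) {ψ : E} (hψ : ‖ψ‖ = 1) :
    ⟪deviation A ψ, deviation B ψ⟫ = ⟪A ψ, B ψ⟫ - conj ⟪ψ, A ψ⟫ * ⟪ψ, B ψ⟫ := by
  have hψψ : ⟪ψ, ψ⟫ = 1 := by simp [inner_self_eq_norm_sq_to_K, hψ]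
  simp only [deviation, inner_sub_left, inner_sub_right, inner_smul_left, inner_smul_right, hψψ]
  rw [← inner_conj_symm (A ψ) ψ]
  ring

theorem norm_sub_ofReal_mul_I_smul_sq (x y : E) (s : ℝ) :
    ‖x - ((s : ℂ) * I) • y‖ ^ 2 = ‖x‖ ^ 2 + 2 * s * (⟪x, y⟫).im + s ^ 2 * ‖y‖ ^ 2 := by
  have hre : ((s : ℂ) * I * ⟪x, y⟫).re = -s * (⟪x, y⟫).im := by simp
  rw [norm_sub_sq (𝕜 := ℂ), inner_smul_right, RCLike.re_to_complex, hre, norm_smul, norm_mul,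
    norm_I, mul_one, norm_real, Real.norm_eq_abs, mul_pow, sq_abs]
  ring

namespace LinearMap.IsSymmetric

variable {A B : E →ₗ[ℂ] E}

theorem norm_deviation_sq (hA : A.IsSymmetric) {ψ : E} (hψ : ‖ψ‖ = 1) :
    ‖deviation A ψ‖ ^ 2 = (⟪ψ, A (A ψ)⟫).re - (⟪ψ, A ψ⟫).re ^ 2 := by
  rw [@norm_sq_eq_re_inner ℂ, inner_deviation_deviation A A hψ, hA ψ (A ψ),
    ← hA.coe_re_inner_self_apply ψ]
  simp [sq]

theorem im_inner_deviation_deviation (hA : A.IsSymmetric) (hB : B.IsSymmetric) {ψ : E}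
    (hψ : ‖ψ‖ = 1) : (⟪deviation A ψ, deviation B ψ⟫).im = (⟪A ψ, B ψ⟫).im := by
  rw [inner_deviation_deviation A B hψ, ← hA.coe_re_inner_self_apply ψ,
    ← hB.coe_re_inner_self_apply ψ]
  simp

theorem re_I_mul_inner_commutator (hA : A.IsSymmetric) (hB : B.IsSymmetric) (ψ : E) :
    (I * ⟪ψ, A (B ψ) - B (A ψ)⟫).re = -2 * (⟪A ψ, B ψ⟫).im := by
  have hsymm : (⟪B ψ, A ψ⟫).im = -(⟪A ψ, B ψ⟫).im := by
    rw [← inner_conj_symm (B ψ) (A ψ), conj_im]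
  rw [inner_sub_right, ← hA ψ (B ψ), ← hB ψ (A ψ)]
  simp only [mul_re, I_re, I_im, sub_im]
  linarith

end LinearMap.IsSymmetric

end

theorem maccone_pati_sum_general
    {E : Type*} [NormedAddCommGroup E] [InnerProductSpace ℂ E]
    (A B : E →ₗ[ℂ] E)
    (hA : ∀ x y : E, ⟪A x, y⟫ = ⟪x, A y⟫)
    (hB : ∀ x y : E, ⟪B x, y⟫ = ⟪x, B y⟫)
    (ψ ψp : E) (hψ : ‖ψ‖ = 1) (hψp : ‖ψp‖ = 1) (horth : ⟪ψ, ψp⟫ = 0)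
    (s : ℝ) (hs : s = 1 ∨ s = -1) :
    ((⟪ψ, A (A ψ)⟫).re - ((⟪ψ, A ψ⟫).re) ^ 2) +
        ((⟪ψ, B (B ψ)⟫).re - ((⟪ψ, B ψ⟫).re) ^ 2) ≥
      s * (Complex.I * ⟪ψ, A (B ψ) - B (A ψ)⟫).re +
        ‖⟪ψ, A ψp + ((s : ℂ) * Complex.I) • B ψp⟫‖ ^ 2 := by
  set φ := deviation A ψ - ((s : ℂ) * I) • deviation B ψ
  have hinner : ⟪ψ, A ψp + ((s : ℂ) * I) • B ψp⟫ = ⟪φ, ψp⟫ := by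
    rw [inner_sub_left, inner_smul_left, inner_deviation_left_of_inner_eq_zero A horth,
      inner_deviation_left_of_inner_eq_zero B horth, inner_add_right, inner_smul_right, hA, hB]
    simp
  have hφ : ‖φ‖ ^ 2 = ((⟪ψ, A (A ψ)⟫).re - ((⟪ψ, A ψ⟫).re) ^ 2) +
      ((⟪ψ, B (B ψ)⟫).re - ((⟪ψ, B ψ⟫).re) ^ 2) - s * (I * ⟪ψ, A (B ψ) - B (A ψ)⟫).re := by
    have hs2 : s ^ 2 = 1 := by rcases hs with rfl | rfl <;> norm_num
    rw [norm_sub_ofReal_mul_I_smul_sq, IsSymmetric.norm_deviation_sq hA hψ,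
      IsSymmetric.norm_deviation_sq hB hψ, IsSymmetric.im_inner_deviation_deviation hA hB hψ,
      IsSymmetric.re_I_mul_inner_commutator hA hB, hs2]
    ring
  have hCS : ‖⟪φ, ψp⟫‖ ≤ ‖φ‖ := by simpa [hψp] using norm_inner_le_norm (𝕜 := ℂ) φ ψp
  rw [hinner, ge_iff_le]
  linarith [pow_le_pow_left₀ (norm_nonneg _) hCS 2]

/-- Maccone–Pati sum uncertainty relation:
ΔA² + ΔB² ≥ ±i⟨ψ,[A,B]ψ⟩ + |⟨ψ,(A ± iB)ψ⊥⟩|², sign chosen so ±i⟨ψ,[A,B]ψ⟩ ≥ 0. -/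
theorem maccone_pati_sum
    {E : Type*} [NormedAddCommGroup E] [InnerProductSpace ℂ E]
    (A B : E →ₗ[ℂ] E)
    (hA : ∀ x y : E, ⟪A x, y⟫ = ⟪x, A y⟫)
    (hB : ∀ x y : E, ⟪B x, y⟫ = ⟪x, B y⟫)
    (ψ ψp : E) (hψ : ‖ψ‖ = 1) (hψp : ‖ψp‖ = 1) (horth : ⟪ψ, ψp⟫ = 0)
    (s : ℝ) (hs : s = 1 ∨ s = -1)
    (hsign : 0 ≤ s * (Complex.I * ⟪ψ, A (B ψ) - B (A ψ)⟫).re) :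
    ((⟪ψ, A (A ψ)⟫).re - ((⟪ψ, A ψ⟫).re) ^ 2) +
        ((⟪ψ, B (B ψ)⟫).re - ((⟪ψ, B ψ⟫).re) ^ 2) ≥
      s * (Complex.I * ⟪ψ, A (B ψ) - B (A ψ)⟫).re +
        ‖⟪ψ, A ψp + ((s : ℂ) * Complex.I) • B ψp⟫‖ ^ 2 :=
  maccone_pati_sum_general A B hA hB ψ ψp hψ hψp horth s hs
end

section
/- Let N and D be self-adjoint operators on a complex Hilbert space, Ψ a unit vector, and Ψ⊥ a unit vector orthogonal to Ψ. Then ⟨Ψ, N²Ψ⟩ + ⟨Ψ, D²Ψ⟩ ≥ ±i⟨Ψ, [N,D]Ψ⟩ + |⟨Ψ, (N ± iD)Ψ⊥⟩|², since the second moments dominate the variances. -/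
open Complex

local notation "⟪" x ", " y "⟫" => @inner ℂ _ _ x y

/-!
With `g = NΨ - i s DΨ`, symmetry of `N` and `D` gives
`‖g‖² = ⟨Ψ,N²Ψ⟩ + ⟨Ψ,D²Ψ⟩ - s·Re(i⟨Ψ,[N,D]Ψ⟩)` and `⟨Ψ,(N + i s D)Ψ⊥⟩ = ⟨g,Ψ⊥⟩`,
so the inequality is Cauchy–Schwarz `|⟨g,Ψ⊥⟩| ≤ ‖g‖` for the unit vector `Ψ⊥`.
-/

namespace LinearMap.IsSymmetric

variable {𝕜 E : Type*} [RCLike 𝕜] [NormedAddCommGroup E] [InnerProductSpace 𝕜 E]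

theorem re_inner_apply_apply {T : E →ₗ[𝕜] E} (hT : T.IsSymmetric) (x : E) :
    RCLike.re (inner 𝕜 x (T (T x))) = ‖T x‖ ^ 2 := by
  rw [← hT]
  exact inner_self_eq_norm_sq (T x)

theorem inner_add_smul_apply {S T : E →ₗ[𝕜] E} (hS : S.IsSymmetric) (hT : T.IsSymmetric)
    (c : 𝕜) (x y : E) :
    inner 𝕜 x (S y + c • T y) = inner 𝕜 (S x + (starRingEnd 𝕜) c • T x) y := by
  rw [inner_add_right, inner_smul_right, inner_add_left, inner_smul_left, RCLike.conj_conj,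
    hS, hT]

end LinearMap.IsSymmetric

section Complex

variable {E : Type*} [NormedAddCommGroup E] [InnerProductSpace ℂ E]

theorem LinearMap.IsSymmetric.re_I_mul_inner_commutator_s4 {S T : E →ₗ[ℂ] E}
    (hS : S.IsSymmetric) (hT : T.IsSymmetric) (x : E) :
    (I * ⟪x, S (T x) - T (S x)⟫).re = -2 * ⟪S x, T x⟫.im := by
  rw [inner_sub_right, ← hS x (T x), ← hT x (S x), ← inner_conj_symm (T x) (S x)]
  simp only [mul_re, sub_re, sub_im, I_re, I_im, conj_re, conj_im]
  ring

theorem norm_add_ofReal_mul_I_smul_sq (r : ℝ) (x y : E) :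
    ‖x + ((r : ℂ) * I) • y‖ ^ 2 = ‖x‖ ^ 2 + r ^ 2 * ‖y‖ ^ 2 - 2 * r * ⟪x, y⟫.im := by
  rw [@norm_add_sq ℂ, inner_smul_right, norm_smul, mul_pow]
  simp only [RCLike.re_to_complex, mul_re, mul_im, ofReal_re, ofReal_im, I_re, I_im, norm_mul,
    norm_I, mul_one, norm_real, Real.norm_eq_abs, sq_abs]
  ring

end Complex

theorem second_moment_sum_bound_general
    {E : Type*} [NormedAddCommGroup E] [InnerProductSpace ℂ E]
    (N D : E →ₗ[ℂ] E)
    (hN : ∀ x y : E, ⟪N x, y⟫ = ⟪x, N y⟫)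
    (hD : ∀ x y : E, ⟪D x, y⟫ = ⟪x, D y⟫)
    (Ψ Ψp : E) (hΨp : ‖Ψp‖ = 1)
    (s : ℝ) (hs : s = 1 ∨ s = -1) :
    (⟪Ψ, N (N Ψ)⟫).re + (⟪Ψ, D (D Ψ)⟫).re ≥
      s * (Complex.I * ⟪Ψ, N (D Ψ) - D (N Ψ)⟫).re +
        ‖⟪Ψ, N Ψp + ((s : ℂ) * Complex.I) • D Ψp⟫‖ ^ 2 := by
  have hN : N.IsSymmetric := hN
  have hD : D.IsSymmetric := hD
  have hs2 : s ^ 2 = 1 := by rcases hs with rfl | rfl <;> norm_num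
  set g := N Ψ + (((-s : ℝ) : ℂ) * I) • D Ψ
  have hinner : ⟪Ψ, N Ψp + ((s : ℂ) * I) • D Ψp⟫ = ⟪g, Ψp⟫ := by
    rw [hN.inner_add_smul_apply hD]
    simp [g, inner_add_left]
  have hcs : ‖⟪g, Ψp⟫‖ ≤ ‖g‖ := by simpa [hΨp] using norm_inner_le_norm (𝕜 := ℂ) g Ψp
  have hg : ‖g‖ ^ 2 = ‖N Ψ‖ ^ 2 + ‖D Ψ‖ ^ 2 + 2 * s * ⟪N Ψ, D Ψ⟫.im := by
    rw [norm_add_ofReal_mul_I_smul_sq, neg_sq, hs2]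
    ring
  have hNN : ⟪Ψ, N (N Ψ)⟫.re = ‖N Ψ‖ ^ 2 := hN.re_inner_apply_apply Ψ
  have hDD : ⟪Ψ, D (D Ψ)⟫.re = ‖D Ψ‖ ^ 2 := hD.re_inner_apply_apply Ψ
  rw [hNN, hDD, hN.re_I_mul_inner_commutator_s4 hD, hinner]
  nlinarith [pow_le_pow_left₀ (norm_nonneg _) hcs 2]

/-- Second moments dominate variances in the Maccone–Pati sum relation:
⟨Ψ,N²Ψ⟩ + ⟨Ψ,D²Ψ⟩ ≥ ±i⟨Ψ,[N,D]Ψ⟩ + |⟨Ψ,(N ± iD)Ψ⊥⟩|². -/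
theorem second_moment_sum_bound
    {E : Type*} [NormedAddCommGroup E] [InnerProductSpace ℂ E]
    (N D : E →ₗ[ℂ] E)
    (hN : ∀ x y : E, ⟪N x, y⟫ = ⟪x, N y⟫)
    (hD : ∀ x y : E, ⟪D x, y⟫ = ⟪x, D y⟫)
    (Ψ Ψp : E) (hΨ : ‖Ψ‖ = 1) (hΨp : ‖Ψp‖ = 1) (horth : ⟪Ψ, Ψp⟫ = 0)
    (s : ℝ) (hs : s = 1 ∨ s = -1)
    (hsign : 0 ≤ s * (Complex.I * ⟪Ψ, N (D Ψ) - D (N Ψ)⟫).re) :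
    (⟪Ψ, N (N Ψ)⟫).re + (⟪Ψ, D (D Ψ)⟫).re ≥
      s * (Complex.I * ⟪Ψ, N (D Ψ) - D (N Ψ)⟫).re +
        ‖⟪Ψ, N Ψp + ((s : ℂ) * Complex.I) • D Ψp⟫‖ ^ 2 :=
  second_moment_sum_bound_general N D hN hD Ψ Ψp hΨp s hs
end

section
/- Corollary of the strengthened product uncertainty relation: for self-adjoint A, B, unit vector ψ with ΔA, ΔB > 0, and unit ψ⊥ ⟂ ψ: (1/2)|⟨ψ,[A,B]ψ⟩| ≤ ΔA·ΔB − (1/2)·|⟨ψ, (A·ΔB ± iB·ΔA)ψ⊥⟩|²/(ΔA·ΔB), with sign chosen so ±i⟨ψ,[A,B]ψ⟩ ≥ 0. -/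
open Complex

local notation "⟪" x ", " y "⟫" => @inner ℂ _ _ x y

/-- Standard deviation of a (self-adjoint) operator `A` in state `ψ`. -/
noncomputable def sdev {E : Type*} [NormedAddCommGroup E] [InnerProductSpace ℂ E]
    (A : E →ₗ[ℂ] E) (ψ : E) : ℝ :=
  Real.sqrt ((⟪ψ, A (A ψ)⟫).re - ((⟪ψ, A ψ⟫).re) ^ 2)

/-!
Put `a = Aψ - ⟨A⟩ψ` and `b = Bψ - ⟨B⟩ψ`. Then `ΔA = ‖a‖`, `ΔB = ‖b‖` and
`⟨ψ, [A,B]ψ⟩ = 2i Im⟨a, b⟩`. Since `ψ⊥ ⟂ ψ`, the inner product on the right-hand side is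
`⟨w, ψ⊥⟩` with `w = ΔB a ∓ i ΔA b`, and the sign condition makes
`‖w‖² = 2 ΔA ΔB (ΔA ΔB - |Im⟨a, b⟩|)`, while `|Im⟨a, b⟩| ≤ ΔA ΔB`.
Cauchy–Schwarz `|⟨w, ψ⊥⟩| ≤ ‖w‖` concludes.
-/

noncomputable def centered {E : Type*} [NormedAddCommGroup E] [InnerProductSpace ℂ E]
    (A : E →ₗ[ℂ] E) (ψ : E) : E :=
  A ψ - ((⟪ψ, A ψ⟫.re : ℝ) : ℂ) • ψ

section Centered

variable {E : Type*} [NormedAddCommGroup E] [InnerProductSpace ℂ E] {A B : E →ₗ[ℂ] E} {ψ : E}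

theorem ofReal_re_inner_self_apply (hA : A.IsSymmetric) (x : E) :
    ((⟪x, A x⟫.re : ℝ) : ℂ) = ⟪x, A x⟫ :=
  hA.coe_re_inner_self_apply x

theorem inner_self_centered (hA : A.IsSymmetric) (hψ : ‖ψ‖ = 1) : ⟪ψ, centered A ψ⟫ = 0 := by
  rw [centered, inner_sub_right, inner_smul_right, inner_self_eq_one_of_norm_eq_one hψ,
    ofReal_re_inner_self_apply hA, mul_one, sub_self]

theorem inner_centered_left {φ : E} (hφ : ⟪ψ, φ⟫ = 0) : ⟪centered A ψ, φ⟫ = ⟪A ψ, φ⟫ := by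
  rw [centered, inner_sub_left, inner_smul_left, hφ, mul_zero, sub_zero]

theorem inner_apply_eq_inner_centered (hA : A.IsSymmetric) {φ : E} (hφ : ⟪ψ, φ⟫ = 0) :
    ⟪ψ, A φ⟫ = ⟪centered A ψ, φ⟫ := by
  rw [inner_centered_left hφ, hA]

theorem inner_centered_centered (hA : A.IsSymmetric) (hB : B.IsSymmetric) (hψ : ‖ψ‖ = 1) :
    ⟪centered A ψ, centered B ψ⟫ = ⟪A ψ, B ψ⟫ - ⟪ψ, A ψ⟫.re * ⟪ψ, B ψ⟫.re := by
  rw [inner_centered_left (inner_self_centered hB hψ), centered, inner_sub_right,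
    inner_smul_right, hA ψ ψ, ofReal_re_inner_self_apply hA]
  ring

theorem sdev_eq_norm_centered (hA : A.IsSymmetric) (hψ : ‖ψ‖ = 1) :
    sdev A ψ = ‖centered A ψ‖ := by
  have hnorm : ‖centered A ψ‖ ^ 2 = ⟪ψ, A (A ψ)⟫.re - ⟪ψ, A ψ⟫.re ^ 2 := by
    rw [← inner_self_eq_norm_sq (𝕜 := ℂ), inner_centered_centered hA hA hψ, hA]
    simp [sq]
  rw [sdev, ← hnorm, Real.sqrt_sq (norm_nonneg _)]

theorem inner_commutator_eq (hA : A.IsSymmetric) (hB : B.IsSymmetric) (hψ : ‖ψ‖ = 1) :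
    ⟪ψ, A (B ψ) - B (A ψ)⟫ = ((2 * ⟪centered A ψ, centered B ψ⟫.im : ℝ) : ℂ) * I := by
  rw [← sub_conj, inner_conj_symm, inner_centered_centered hA hB hψ,
    inner_centered_centered hB hA hψ, inner_sub_right, ← hA ψ, ← hB ψ]
  ring

end Centered

theorem norm_smul_add_I_smul_sq {E : Type*} [NormedAddCommGroup E] [InnerProductSpace ℂ E]
    (x y : ℝ) (u v : E) :
    ‖(x : ℂ) • u + ((y : ℂ) * I) • v‖ ^ 2 =
      x ^ 2 * ‖u‖ ^ 2 + y ^ 2 * ‖v‖ ^ 2 - 2 * x * y * ⟪u, v⟫.im := by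
  rw [norm_add_sq (𝕜 := ℂ), inner_smul_left, inner_smul_right, norm_smul, norm_smul, conj_ofReal,
    norm_mul, norm_I, norm_real, norm_real, RCLike.re_to_complex, mul_assoc, re_ofReal_mul,
    mul_assoc, re_ofReal_mul, mul_comm I, mul_I_re]
  simp only [Real.norm_eq_abs, mul_pow, sq_abs]
  ring

theorem mul_eq_neg_abs_of_mul_nonpos {s x : ℝ} (hs : s = 1 ∨ s = -1) (h : s * x ≤ 0) :
    s * x = -|x| := by
  rcases hs with rfl | rfl
  · rw [abs_of_nonpos (by linarith)]; ring
  · rw [abs_of_nonneg (by linarith)]; ring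

-- At `p = 0` the junk value `X / 0 = 0` is harmless because `m ≤ p`.
theorem le_sub_half_div_of_le_mul_sub {m p X : ℝ} (hm : 0 ≤ m) (hmp : m ≤ p)
    (hX : X ≤ 2 * p * (p - m)) : m ≤ p - 1 / 2 * X / p := by
  rcases (hm.trans hmp).eq_or_lt with rfl | hp
  · simpa using hmp
  · rw [le_sub_iff_add_le, ← le_sub_iff_add_le', div_le_iff₀ hp]
    linarith

theorem maccone_pati_product_corollary_general
    {E : Type*} [NormedAddCommGroup E] [InnerProductSpace ℂ E]
    (A B : E →ₗ[ℂ] E)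
    (hA : ∀ x y : E, ⟪A x, y⟫ = ⟪x, A y⟫)
    (hB : ∀ x y : E, ⟪B x, y⟫ = ⟪x, B y⟫)
    (ψ ψp : E) (hψ : ‖ψ‖ = 1) (hψp : ‖ψp‖ = 1) (horth : ⟪ψ, ψp⟫ = 0)
    (s : ℝ) (hs : s = 1 ∨ s = -1)
    (hsign : 0 ≤ s * (Complex.I * ⟪ψ, A (B ψ) - B (A ψ)⟫).re) :
    (1 / 2) * ‖⟪ψ, A (B ψ) - B (A ψ)⟫‖ ≤
      sdev A ψ * sdev B ψ -
        (1 / 2) *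
          (‖⟪ψ, ((sdev B ψ : ℂ)) • A ψp
            + ((s : ℂ) * Complex.I) • (((sdev A ψ : ℂ)) • B ψp)⟫‖) ^ 2 /
          (sdev A ψ * sdev B ψ) := by
  rw [inner_commutator_eq hA hB hψ] at hsign ⊢
  rw [sdev_eq_norm_centered hA hψ, sdev_eq_norm_centered hB hψ]
  set a := centered A ψ
  set b := centered B ψ
  set z := ⟪a, b⟫
  have hsz : s * z.im = -|z.im| := by
    rw [mul_left_comm, I_mul_I, mul_neg_one, neg_re, ofReal_re] at hsign
    exact mul_eq_neg_abs_of_mul_nonpos hs (by linarith)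
  set w := (‖b‖ : ℂ) • a + (((-s * ‖a‖ : ℝ) : ℂ) * I) • b
  have hw : ⟪ψ, (‖b‖ : ℂ) • A ψp + ((s : ℂ) * I) • ((‖a‖ : ℂ) • B ψp)⟫ = ⟪w, ψp⟫ := by
    simp only [w, inner_add_left, inner_add_right, inner_smul_left, inner_smul_right,
      inner_apply_eq_inner_centered hA horth, inner_apply_eq_inner_centered hB horth, map_mul,
      conj_ofReal, conj_I]
    push_cast
    ring
  have hnw : ‖w‖ ^ 2 = 2 * (‖a‖ * ‖b‖) * (‖a‖ * ‖b‖ - |z.im|) := by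
    rw [norm_smul_add_I_smul_sq]
    rcases hs with rfl | rfl <;> linear_combination (2 * ‖a‖ * ‖b‖) * hsz
  have hcs : ‖⟪w, ψp⟫‖ ≤ ‖w‖ := by simpa [hψp] using norm_inner_le_norm (𝕜 := ℂ) w ψp
  have hlhs : (1 / 2 : ℝ) * ‖((2 * z.im : ℝ) : ℂ) * I‖ = |z.im| := by
    rw [norm_mul, norm_I, norm_real, Real.norm_eq_abs, abs_mul, abs_two]
    ring
  rw [hw, hlhs]
  refine le_sub_half_div_of_le_mul_sub (abs_nonneg _)
    ((abs_im_le_norm z).trans (norm_inner_le_norm a b)) ?_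
  rw [← hnw]
  gcongr

/-- Corollary of the Maccone–Pati product relation:
(1/2)|⟨ψ,[A,B]ψ⟩| ≤ ΔA·ΔB − (1/2)|⟨ψ,(A·ΔB ± iB·ΔA)ψ⊥⟩|² / (ΔA·ΔB). -/
theorem maccone_pati_product_corollary
    {E : Type*} [NormedAddCommGroup E] [InnerProductSpace ℂ E]
    (A B : E →ₗ[ℂ] E)
    (hA : ∀ x y : E, ⟪A x, y⟫ = ⟪x, A y⟫)
    (hB : ∀ x y : E, ⟪B x, y⟫ = ⟪x, B y⟫)
    (ψ ψp : E) (hψ : ‖ψ‖ = 1) (hψp : ‖ψp‖ = 1) (horth : ⟪ψ, ψp⟫ = 0)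
    (hΔA : 0 < sdev A ψ) (hΔB : 0 < sdev B ψ)
    (s : ℝ) (hs : s = 1 ∨ s = -1)
    (hsign : 0 ≤ s * (Complex.I * ⟪ψ, A (B ψ) - B (A ψ)⟫).re) :
    (1 / 2) * ‖⟪ψ, A (B ψ) - B (A ψ)⟫‖ ≤
      sdev A ψ * sdev B ψ -
        (1 / 2) *
          (‖⟪ψ, ((sdev B ψ : ℂ)) • A ψp
            + ((s : ℂ) * Complex.I) • (((sdev A ψ : ℂ)) • B ψp)⟫‖) ^ 2 /
          (sdev A ψ * sdev B ψ) :=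
  maccone_pati_product_corollary_general A B hA hB ψ ψp hψ hψp horth s hs hsign
end

section
/- Ozawa's error-disturbance relation: with N = M_out − A, D = B_out − B self-adjoint, [M_out,B_out]=0, Ψ a unit vector, ε = ‖NΨ‖, η = ‖DΨ‖, and ΔA, ΔB the standard deviations of A, B in Ψ: ε·η + ε·ΔB + ΔA·η ≥ (1/2)|⟨Ψ,[A,B]Ψ⟩|. -/
open Complex

local notation "⟪" x ", " y "⟫" => @inner ℂ _ _ x y

/-!
Every term of the error–disturbance bound is controlled by the imaginary part of an inner
product, `|Im ⟪x, y⟫| ≤ ‖x‖ ‖y‖`. Since `M_out` and `B_out` commute,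
`Im ⟪M_out Ψ, B_out Ψ⟫ = 0`; writing `M_out = N + A` and `B_out = D + B` expresses
`Im ⟪A Ψ, B Ψ⟫ = ⟪Ψ, [A, B] Ψ⟫ / 2i` through the three cross terms
`Im ⟪N Ψ, D Ψ⟫`, `Im ⟪N Ψ, B Ψ⟫`, `Im ⟪A Ψ, D Ψ⟫`. In the last two, `A Ψ` and `B Ψ` may be
replaced by their centred versions `A Ψ - ⟨A⟩ Ψ`, `B Ψ - ⟨B⟩ Ψ` (whose norms are `ΔA`, `ΔB`),
because `⟪N Ψ, Ψ⟫` and `⟪D Ψ, Ψ⟫` are real.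
-/

section

variable {E : Type*} [NormedAddCommGroup E] [InnerProductSpace ℂ E]

theorem abs_im_inner_le_norm_mul_norm (x y : E) : |(⟪x, y⟫).im| ≤ ‖x‖ * ‖y‖ :=
  (abs_im_le_norm _).trans (norm_inner_le_norm x y)

theorem norm_inner_sub_inner_swap (x y : E) : ‖⟪x, y⟫ - ⟪y, x⟫‖ = 2 * |(⟪x, y⟫).im| := by
  rw [← inner_conj_symm y x, sub_conj, norm_mul, norm_I, mul_one, norm_real, Real.norm_eq_abs,
    abs_mul, abs_two]

namespace LinearMap.IsSymmetric

variable {S T : E →ₗ[ℂ] E}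

theorem norm_inner_commutator (hS : S.IsSymmetric) (hT : T.IsSymmetric) (x : E) :
    ‖⟪x, S (T x) - T (S x)⟫‖ = 2 * |(⟪S x, T x⟫).im| := by
  rw [inner_sub_right, ← hS, ← hT, norm_inner_sub_inner_swap]

theorem im_inner_apply_apply_eq_zero_of_comm (hS : S.IsSymmetric) (hT : T.IsSymmetric)
    (hST : S ∘ₗ T = T ∘ₗ S) (x : E) : (⟪S x, T x⟫).im = 0 := by
  refine conj_eq_iff_im.mp ?_
  rw [inner_conj_symm, hT, ← LinearMap.comp_apply, ← hST, LinearMap.comp_apply, ← hS]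

theorem im_inner_apply_sub_smul_self (hT : T.IsSymmetric) (x y : E) (c : ℝ) :
    (⟪T x, y - (c : ℂ) • x⟫).im = (⟪T x, y⟫).im := by
  have h : (⟪T x, x⟫).im = 0 := hT.im_inner_apply_self x
  rw [inner_sub_right, inner_smul_right, sub_im, im_ofReal_mul, h, mul_zero, sub_zero]

theorem sdev_eq_norm_sub_smul (hT : T.IsSymmetric) {x : E} (hx : ‖x‖ = 1) :
    sdev T x = ‖T x - ((⟪x, T x⟫).re : ℂ) • x‖ := by
  set c := (⟪x, T x⟫).re
  have hTx : (⟪T x, T x⟫).re = ‖T x‖ ^ 2 := inner_self_eq_norm_sq (𝕜 := ℂ) (T x)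
  have hvar : ‖T x - (c : ℂ) • x‖ ^ 2 = (⟪x, T (T x)⟫).re - c ^ 2 := by
    rw [@norm_sub_sq ℂ, RCLike.re_to_complex, inner_smul_right, re_ofReal_mul, hT, norm_smul,
      hx, ← hT x (T x), hTx, norm_real, Real.norm_eq_abs, mul_one, sq_abs]
    ring
  rw [sdev, ← hvar, Real.sqrt_sq (norm_nonneg _)]

theorem abs_im_inner_le_norm_mul_sdev (hS : S.IsSymmetric) (hT : T.IsSymmetric) {x : E}
    (hx : ‖x‖ = 1) : |(⟪S x, T x⟫).im| ≤ ‖S x‖ * sdev T x := by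
  rw [← hS.im_inner_apply_sub_smul_self x (T x) (⟪x, T x⟫).re, hT.sdev_eq_norm_sub_smul hx]
  exact abs_im_inner_le_norm_mul_norm _ _

theorem abs_im_inner_le_sdev_mul_norm (hS : S.IsSymmetric) (hT : T.IsSymmetric) {x : E}
    (hx : ‖x‖ = 1) : |(⟪S x, T x⟫).im| ≤ sdev S x * ‖T x‖ := by
  rw [← inner_conj_symm, conj_im, abs_neg, mul_comm]
  exact hT.abs_im_inner_le_norm_mul_sdev hS hx

end LinearMap.IsSymmetric

end

/-- Ozawa's error–disturbance relation: εη + εΔB + ΔA·η ≥ (1/2)|⟨Ψ,[A,B]Ψ⟩|. -/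
theorem ozawa_relation
    {E : Type*} [NormedAddCommGroup E] [InnerProductSpace ℂ E]
    (A B Mo Bo : E →ₗ[ℂ] E)
    (hA : ∀ x y : E, ⟪A x, y⟫ = ⟪x, A y⟫)
    (hB : ∀ x y : E, ⟪B x, y⟫ = ⟪x, B y⟫)
    (hMo : ∀ x y : E, ⟪Mo x, y⟫ = ⟪x, Mo y⟫)
    (hBo : ∀ x y : E, ⟪Bo x, y⟫ = ⟪x, Bo y⟫)
    (hcomm : Mo ∘ₗ Bo = Bo ∘ₗ Mo)
    (N D : E →ₗ[ℂ] E) (hN : N = Mo - A) (hD : D = Bo - B)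
    (Ψ : E) (hΨ : ‖Ψ‖ = 1) :
    ‖N Ψ‖ * ‖D Ψ‖ + ‖N Ψ‖ * sdev B Ψ + sdev A Ψ * ‖D Ψ‖ ≥
      (1 / 2) * ‖⟪Ψ, A (B Ψ) - B (A Ψ)⟫‖ := by
  have hNs : N.IsSymmetric := hN ▸ LinearMap.IsSymmetric.sub hMo hA
  have hDs : D.IsSymmetric := hD ▸ LinearMap.IsSymmetric.sub hBo hB
  have hsplit : (⟪A Ψ, B Ψ⟫).im = -((⟪N Ψ, D Ψ⟫).im + (⟪N Ψ, B Ψ⟫).im + (⟪A Ψ, D Ψ⟫).im) := by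
    have hout := LinearMap.IsSymmetric.im_inner_apply_apply_eq_zero_of_comm hMo hBo hcomm Ψ
    rw [show Mo Ψ = N Ψ + A Ψ by simp [hN], show Bo Ψ = D Ψ + B Ψ by simp [hD]] at hout
    simp only [inner_add_left, inner_add_right, add_im] at hout
    linarith
  have hND := abs_im_inner_le_norm_mul_norm (N Ψ) (D Ψ)
  have hNB := hNs.abs_im_inner_le_norm_mul_sdev hB hΨ
  have hAD := LinearMap.IsSymmetric.abs_im_inner_le_sdev_mul_norm hA hDs hΨ
  have htri := abs_add_three (⟪N Ψ, D Ψ⟫).im (⟪N Ψ, B Ψ⟫).im (⟪A Ψ, D Ψ⟫).im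
  rw [LinearMap.IsSymmetric.norm_inner_commutator hA hB, hsplit, abs_neg]
  linarith
end

section
/- Yao et al. sum-of-variances equality: for self-adjoint A, B on a d-dimensional complex Hilbert space, a unit vector Ψ, and an orthonormal basis {Ψ, Ψ₁⊥, …, Ψ_{d−1}⊥} containing Ψ: ΔA² + ΔB² = ±i⟨Ψ,[A,B]Ψ⟩ + Σ_{k=1}^{d−1} |⟨Ψ, (A ± iB)Ψ_k⊥⟩|², where the same sign ± is used throughout. -/
/-!
Write `⟨T⟩ = ⟪Ψ, T Ψ⟫` and `t = s i`. Symmetry of `A` and `B` gives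
`⟪Ψ, (A + t B) v⟫ = ⟪(A - t B) Ψ, v⟫`, so by Parseval the sum over the whole basis is
`‖(A - t B) Ψ‖² = ⟨A²⟩ + ⟨B²⟩ - s Re (i ⟨[A, B]⟩)`. The `k = 0` term is
`|⟨A⟩ + t ⟨B⟩|² = ⟨A⟩² + ⟨B⟩²`, because expectations of symmetric operators are real.
-/

open Complex

local notation "⟪" x ", " y "⟫" => @inner ℂ _ _ x y

namespace LinearMap.IsSymmetric

section RCLike

variable {𝕜 E : Type*} [RCLike 𝕜] [NormedAddCommGroup E] [InnerProductSpace 𝕜 E]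
  {A B : E →ₗ[𝕜] E}

theorem inner_add_smul_apply_right (hA : A.IsSymmetric) (hB : B.IsSymmetric) (c : 𝕜) (x v : E) :
    inner 𝕜 x (A v + c • B v) = inner 𝕜 (A x + (starRingEnd 𝕜) c • B x) v := by
  rw [inner_add_right, inner_smul_right, inner_add_left, inner_smul_left, hA, hB,
    RCLike.conj_conj]

theorem sum_sq_norm_inner_add_smul_apply {ι : Type*} [Fintype ι] (hA : A.IsSymmetric)
    (hB : B.IsSymmetric) (b : OrthonormalBasis ι 𝕜 E) (c : 𝕜) (x : E) :
    ∑ k, ‖inner 𝕜 x (A (b k) + c • B (b k))‖ ^ 2 = ‖A x + (starRingEnd 𝕜) c • B x‖ ^ 2 := by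
  simp_rw [hA.inner_add_smul_apply_right hB]
  exact b.sum_sq_norm_inner_left _

end RCLike

variable {E : Type*} [NormedAddCommGroup E] [InnerProductSpace ℂ E] {A B : E →ₗ[ℂ] E}

theorem sq_norm_inner_add_real_mul_I_smul (hA : A.IsSymmetric) (hB : B.IsSymmetric) (r : ℝ)
    (x : E) :
    ‖⟪x, A x + (r * I) • B x⟫‖ ^ 2 = ⟪x, A x⟫.re ^ 2 + r ^ 2 * ⟪x, B x⟫.re ^ 2 := by
  have hAx : ⟪x, A x⟫.im = 0 := hA.im_inner_self_apply x
  have hBx : ⟪x, B x⟫.im = 0 := hB.im_inner_self_apply x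
  rw [inner_add_right, inner_smul_right, Complex.sq_norm, normSq_apply]
  simp only [add_re, add_im, mul_re, mul_im, ofReal_re, ofReal_im, I_re, I_im, hAx, hBx]
  ring

theorem sq_norm_add_real_mul_I_smul (hA : A.IsSymmetric) (hB : B.IsSymmetric) (r : ℝ) (x : E) :
    ‖A x + (r * I) • B x‖ ^ 2 = ⟪x, A (A x)⟫.re + r ^ 2 * ⟪x, B (B x)⟫.re
      + r * (I * ⟪x, A (B x) - B (A x)⟫).re := by
  have hBA : ⟪x, B (A x)⟫ = (starRingEnd ℂ) ⟪x, A (B x)⟫ := by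
    rw [← hB, ← hA x, inner_conj_symm]
  rw [← inner_self_eq_norm_sq (𝕜 := ℂ)]
  simp only [inner_add_left, inner_add_right, inner_smul_left, inner_smul_right, inner_sub_right,
    hA _ (A _), hA _ (B _), hB _ (A _), hB _ (B _), hBA]
  simp only [RCLike.re_to_complex, map_mul, conj_ofReal, conj_I, add_re, add_im, sub_re, sub_im,
    neg_re, neg_im, mul_re, mul_im, conj_re, conj_im, ofReal_re, ofReal_im, I_re, I_im]
  ring

end LinearMap.IsSymmetric

open LinearMap.IsSymmetric

theorem yao_sum_of_variances_equality_general
    {d : ℕ} (hd : 0 < d)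
    {E : Type*} [NormedAddCommGroup E] [InnerProductSpace ℂ E]
    (A B : E →ₗ[ℂ] E)
    (hA : ∀ x y : E, ⟪A x, y⟫ = ⟪x, A y⟫)
    (hB : ∀ x y : E, ⟪B x, y⟫ = ⟪x, B y⟫)
    (b : OrthonormalBasis (Fin d) ℂ E)
    (Ψ : E) (hΨ : b ⟨0, hd⟩ = Ψ)
    (s : ℝ) (hs : s = 1 ∨ s = -1) :
    ((⟪Ψ, A (A Ψ)⟫).re - ((⟪Ψ, A Ψ⟫).re) ^ 2) +
        ((⟪Ψ, B (B Ψ)⟫).re - ((⟪Ψ, B Ψ⟫).re) ^ 2) =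
      s * (Complex.I * ⟪Ψ, A (B Ψ) - B (A Ψ)⟫).re +
        ∑ k ∈ Finset.univ.filter (fun k : Fin d => k ≠ ⟨0, hd⟩),
          (‖⟪Ψ, A (b k) + ((s : ℂ) * Complex.I) • B (b k)⟫‖) ^ 2 := by
  have hs2 : s ^ 2 = 1 := by rcases hs with rfl | rfl <;> norm_num
  have hconj : (starRingEnd ℂ) ((s : ℂ) * I) = ((-s : ℝ) : ℂ) * I := by simp
  rw [Finset.filter_ne', Finset.sum_erase_eq_sub (Finset.mem_univ _),
    sum_sq_norm_inner_add_smul_apply hA hB, hconj, sq_norm_add_real_mul_I_smul hA hB, hΨ,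
    sq_norm_inner_add_real_mul_I_smul hA hB]
  linear_combination (⟪Ψ, B Ψ⟫.re ^ 2 - ⟪Ψ, B (B Ψ)⟫.re) * hs2

/-- Yao et al. sum-of-variances equality:
ΔA² + ΔB² = ±i⟨Ψ,[A,B]Ψ⟩ + Σ_{k≠0} |⟨Ψ,(A ± iB)Ψₖ⊥⟩|²,
where {Ψ = b 0, b 1, …, b (d−1)} is an orthonormal basis. -/
theorem yao_sum_of_variances_equality
    {d : ℕ} (hd : 0 < d)
    {E : Type*} [NormedAddCommGroup E] [InnerProductSpace ℂ E] [FiniteDimensional ℂ E]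
    (A B : E →ₗ[ℂ] E)
    (hA : ∀ x y : E, ⟪A x, y⟫ = ⟪x, A y⟫)
    (hB : ∀ x y : E, ⟪B x, y⟫ = ⟪x, B y⟫)
    (b : OrthonormalBasis (Fin d) ℂ E)
    (Ψ : E) (hΨ : b ⟨0, hd⟩ = Ψ)
    (s : ℝ) (hs : s = 1 ∨ s = -1) :
    ((⟪Ψ, A (A Ψ)⟫).re - ((⟪Ψ, A Ψ⟫).re) ^ 2) +
        ((⟪Ψ, B (B Ψ)⟫).re - ((⟪Ψ, B Ψ⟫).re) ^ 2) =
      s * (Complex.I * ⟪Ψ, A (B Ψ) - B (A Ψ)⟫).re +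
        ∑ k ∈ Finset.univ.filter (fun k : Fin d => k ≠ ⟨0, hd⟩),
          (‖⟪Ψ, A (b k) + ((s : ℂ) * Complex.I) • B (b k)⟫‖) ^ 2 :=
  yao_sum_of_variances_equality_general hd A B hA hB b Ψ hΨ s hs
end

section
/- Equality-based error-disturbance relation: with N = M_out − A, D = B_out − B self-adjoint on ℂ^d, [M_out,B_out]=0, Ψ a unit vector, {Ψ, Ψ₁⊥,…,Ψ_{d−1}⊥} an orthonormal basis, ε² = ⟨Ψ,N²Ψ⟩, η² = ⟨Ψ,D²Ψ⟩: ε² + η² ≥ ±i⟨Ψ,[A,B]Ψ⟩ ∓ i⟨Ψ,[M_out,B]Ψ⟩ ∓ i⟨Ψ,[A,B_out]Ψ⟩ + Σ_{k=1}^{d−1} |⟨Ψ,(N ± iD)Ψ_k⊥⟩|². -/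
/-!
Put `v = (N - i s D) Ψ`. Expanding `‖v‖²` with `N`, `D` self-adjoint gives
`‖NΨ‖² + ‖DΨ‖² - s Re(i⟨Ψ, [N, D] Ψ⟩)`, and Parseval in the basis `b` gives
`‖v‖² = Σₖ |⟨bₖ, v⟩|² = Σₖ |⟨Ψ, (N + i s D) bₖ⟩|²`, since `N + i s D` is the adjoint of `N - i s D`.
As `[M_out, B_out] = 0`, `[N, D] = [A, B] - [M_out, B] - [A, B_out]`. Dropping the nonnegative term
`k = 0` of the sum leaves the inequality.
-/

open Complex

local notation "⟪" x ", " y "⟫" => @inner ℂ _ _ x y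

theorem commutator_sub_sub_of_commute {R : Type*} [Ring R] {a b m n : R} (h : Commute m n) :
    (m - a) * (n - b) - (n - b) * (m - a) = (a * b - b * a) - (m * b - b * m) - (a * n - n * a) := by
  simp only [sub_mul, mul_sub, h.eq]
  abel

section

variable {E : Type*} [NormedAddCommGroup E] [InnerProductSpace ℂ E] {N D : E →ₗ[ℂ] E}

theorem LinearMap.IsSymmetric.re_inner_apply_apply_self {T : E →ₗ[ℂ] E} (hT : T.IsSymmetric)
    (x : E) : (⟪x, T (T x)⟫).re = ‖T x‖ ^ 2 := by
  rw [← hT]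
  exact inner_self_eq_norm_sq (𝕜 := ℂ) (T x)

theorem LinearMap.IsSymmetric.inner_sub_I_smul_apply_eq (hN : N.IsSymmetric) (hD : D.IsSymmetric)
    (t : ℝ) (x y : E) :
    ⟪y, N x - ((t : ℂ) * I) • D x⟫ = ⟪N y + ((t : ℂ) * I) • D y, x⟫ := by
  simp [hN y x, hD y x, conj_ofReal]
  ring

theorem LinearMap.IsSymmetric.norm_sub_I_smul_apply_sq (hN : N.IsSymmetric) (hD : D.IsSymmetric)
    (t : ℝ) (x : E) :
    ‖N x - ((t : ℂ) * I) • D x‖ ^ 2 =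
      ‖N x‖ ^ 2 + t ^ 2 * ‖D x‖ ^ 2 - t * (I * ⟪x, N (D x) - D (N x)⟫).re := by
  have hcommutator : ⟪x, N (D x) - D (N x)⟫ = ⟪N x, D x⟫ - starRingEnd ℂ ⟪N x, D x⟫ := by
    rw [inner_sub_right, ← hN, ← hD, inner_conj_symm]
  rw [@norm_sub_sq ℂ, norm_smul, inner_smul_right, hcommutator]
  generalize ⟪N x, D x⟫ = z
  simp [mul_re, mul_pow]
  ring

theorem LinearMap.IsSymmetric.norm_sq_add_sq_mul_norm_sq_eq {ι : Type*} [Fintype ι]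
    (b : OrthonormalBasis ι ℂ E) (hN : N.IsSymmetric) (hD : D.IsSymmetric) (t : ℝ) (x : E) :
    ‖N x‖ ^ 2 + t ^ 2 * ‖D x‖ ^ 2 = t * (I * ⟪x, N (D x) - D (N x)⟫).re
      + ∑ k, ‖⟪x, N (b k) + ((t : ℂ) * I) • D (b k)⟫‖ ^ 2 := by
  have hpars := b.sum_sq_norm_inner_right (N x - ((t : ℂ) * I) • D x)
  simp_rw [hN.inner_sub_I_smul_apply_eq hD, norm_inner_symm] at hpars
  rw [hpars, hN.norm_sub_I_smul_apply_sq hD]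
  ring

end

theorem equality_based_error_disturbance_general
    {d : ℕ} (hd : 0 < d)
    {E : Type*} [NormedAddCommGroup E] [InnerProductSpace ℂ E]
    (A B Mo Bo : E →ₗ[ℂ] E)
    (hA : ∀ x y : E, ⟪A x, y⟫ = ⟪x, A y⟫)
    (hB : ∀ x y : E, ⟪B x, y⟫ = ⟪x, B y⟫)
    (hMo : ∀ x y : E, ⟪Mo x, y⟫ = ⟪x, Mo y⟫)
    (hBo : ∀ x y : E, ⟪Bo x, y⟫ = ⟪x, Bo y⟫)
    (hcomm : Mo ∘ₗ Bo = Bo ∘ₗ Mo)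
    (N D : E →ₗ[ℂ] E) (hN : N = Mo - A) (hD : D = Bo - B)
    (b : OrthonormalBasis (Fin d) ℂ E)
    (Ψ : E)
    (s : ℝ) (hs : s = 1 ∨ s = -1) :
    (⟪Ψ, N (N Ψ)⟫).re + (⟪Ψ, D (D Ψ)⟫).re ≥
      s * (Complex.I * ⟪Ψ, A (B Ψ) - B (A Ψ)⟫).re
        - s * (Complex.I * ⟪Ψ, Mo (B Ψ) - B (Mo Ψ)⟫).re
        - s * (Complex.I * ⟪Ψ, A (Bo Ψ) - Bo (A Ψ)⟫).re
        + ∑ k ∈ Finset.univ.filter (fun k : Fin d => k ≠ ⟨0, hd⟩),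
            ‖⟪Ψ, N (b k) + ((s : ℂ) * Complex.I) • D (b k)⟫‖ ^ 2 := by
  have hNs : N.IsSymmetric := hN ▸ LinearMap.IsSymmetric.sub hMo hA
  have hDs : D.IsSymmetric := hD ▸ LinearMap.IsSymmetric.sub hBo hB
  have hs2 : s ^ 2 = 1 := by rcases hs with rfl | rfl <;> norm_num
  have hcommutator : N (D Ψ) - D (N Ψ) =
      (A (B Ψ) - B (A Ψ)) - (Mo (B Ψ) - B (Mo Ψ)) - (A (Bo Ψ) - Bo (A Ψ)) := by
    have := congrArg (· Ψ) (commutator_sub_sub_of_commute (a := A) (b := B) hcomm)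
    simpa [hN, hD] using this
  have hsum := hNs.norm_sq_add_sq_mul_norm_sq_eq b hDs s Ψ
  rw [hs2, one_mul, hcommutator, inner_sub_right, inner_sub_right, mul_sub, mul_sub, sub_re,
    sub_re] at hsum
  have hdrop := Finset.sum_le_sum_of_subset_of_nonneg (Finset.univ.filter_subset (· ≠ ⟨0, hd⟩))
    fun k _ _ ↦ sq_nonneg ‖⟪Ψ, N (b k) + ((s : ℂ) * I) • D (b k)⟫‖
  rw [hNs.re_inner_apply_apply_self, hDs.re_inner_apply_apply_self]
  linarith

/-- Equality-based error–disturbance relation: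
ε² + η² ≥ ±i⟨Ψ,[A,B]Ψ⟩ ∓ i⟨Ψ,[M_out,B]Ψ⟩ ∓ i⟨Ψ,[A,B_out]Ψ⟩
  + Σ_{k≠0} |⟨Ψ,(N ± iD)Ψₖ⊥⟩|². -/
theorem equality_based_error_disturbance
    {d : ℕ} (hd : 0 < d)
    {E : Type*} [NormedAddCommGroup E] [InnerProductSpace ℂ E] [FiniteDimensional ℂ E]
    (A B Mo Bo : E →ₗ[ℂ] E)
    (hA : ∀ x y : E, ⟪A x, y⟫ = ⟪x, A y⟫)
    (hB : ∀ x y : E, ⟪B x, y⟫ = ⟪x, B y⟫)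
    (hMo : ∀ x y : E, ⟪Mo x, y⟫ = ⟪x, Mo y⟫)
    (hBo : ∀ x y : E, ⟪Bo x, y⟫ = ⟪x, Bo y⟫)
    (hcomm : Mo ∘ₗ Bo = Bo ∘ₗ Mo)
    (N D : E →ₗ[ℂ] E) (hN : N = Mo - A) (hD : D = Bo - B)
    (b : OrthonormalBasis (Fin d) ℂ E)
    (Ψ : E) (hΨ : b ⟨0, hd⟩ = Ψ)
    (s : ℝ) (hs : s = 1 ∨ s = -1) :
    (⟪Ψ, N (N Ψ)⟫).re + (⟪Ψ, D (D Ψ)⟫).re ≥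
      s * (Complex.I * ⟪Ψ, A (B Ψ) - B (A Ψ)⟫).re
        - s * (Complex.I * ⟪Ψ, Mo (B Ψ) - B (Mo Ψ)⟫).re
        - s * (Complex.I * ⟪Ψ, A (Bo Ψ) - Bo (A Ψ)⟫).re
        + ∑ k ∈ Finset.univ.filter (fun k : Fin d => k ≠ ⟨0, hd⟩),
            ‖⟪Ψ, N (b k) + ((s : ℂ) * Complex.I) • D (b k)⟫‖ ^ 2 :=
  equality_based_error_disturbance_general hd A B Mo Bo hA hB hMo hBo hcomm N D hN hD b Ψ s hs
end

section
/- Branciard's relation implies Ozawa's: for nonnegative reals ε, η, ΔA, ΔB, C with C ≤ ΔA·ΔB, if ε²ΔB² + η²ΔA² + 2εη√(ΔA²ΔB² − C²) ≥ C², then εη + εΔB + ΔAη ≥ C. -/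
/-- Branciard's inequality implies Ozawa's inequality (real-variable statement). -/
theorem branciard_implies_ozawa
    (ε η ΔA ΔB C : ℝ)
    (hε : 0 ≤ ε) (hη : 0 ≤ η) (hΔA : 0 ≤ ΔA) (hΔB : 0 ≤ ΔB) (hC : 0 ≤ C)
    (hCle : C ≤ ΔA * ΔB)
    (hBranciard : ε ^ 2 * ΔB ^ 2 + η ^ 2 * ΔA ^ 2
        + 2 * ε * η * Real.sqrt (ΔA ^ 2 * ΔB ^ 2 - C ^ 2) ≥ C ^ 2) :
    ε * η + ε * ΔB + ΔA * η ≥ C := by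
  by_contra h
  push_neg at h
  have hs0 : 0 ≤ Real.sqrt (ΔA ^ 2 * ΔB ^ 2 - C ^ 2) := Real.sqrt_nonneg _
  have hs : Real.sqrt (ΔA ^ 2 * ΔB ^ 2 - C ^ 2) ≤ ΔA * ΔB := by
    rw [show ΔA ^ 2 * ΔB ^ 2 - C ^ 2 = (ΔA * ΔB) ^ 2 - C ^ 2 by ring]
    calc Real.sqrt ((ΔA * ΔB) ^ 2 - C ^ 2) ≤ Real.sqrt ((ΔA * ΔB) ^ 2) :=
          Real.sqrt_le_sqrt (by nlinarith)
      _ = ΔA * ΔB := Real.sqrt_sq (by positivity)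
  nlinarith [mul_nonneg hε hη, mul_nonneg hε hΔB, mul_nonneg hΔA hη,
    mul_nonneg (mul_nonneg hε hη) hs0, sq_nonneg (ε * ΔB + ΔA * η)]
end
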